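/- For a permutation v of [n] with m-marked cycle type ρ̲ₙ (where |ρ| ≤ n), the number of m-partial permutations (d, ω) of [n] with m-marked cycle type ρ such that ω̃ = v equals C(n − |ρ| + m₁(ρ), m₁(ρ)). -/

import Mathlib

/-- An `m`-partial permutation (of ℕ): a finite domain `d` containing `[m] = {0,…,m-1}`
together with a permutation of `d`, encoded by its extension `σ` to `ℕ` which is the
identity outside `d`. -/
structure MPP (m : ℕ) where
  d : Finset ℕ
  σ : Equiv.Perm ℕ
  range_sub : Finset.range m ⊆ d
  fix : ∀ x ∉ d, σ x = x

namespace MPP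

variable {m : ℕ}

@[ext] theorem ext {p q : MPP m} (hd : p.d = q.d) (hσ : p.σ = q.σ) : p = q := by
  cases p; cases q; simp only [mk.injEq]; exact ⟨hd, hσ⟩

/-- The product of `m`-partial permutations: union of the domains, composition of the
extended permutations (restricted to the union). -/
instance : Monoid (MPP m) where
  mul p q := ⟨p.d ∪ q.d, p.σ * q.σ, p.range_sub.trans Finset.subset_union_left,
    fun x hx => by
      have hq : x ∉ q.d := fun h => hx (Finset.mem_union_right _ h)
      have hp : x ∉ p.d := fun h => hx (Finset.mem_union_left _ h)
      simp [Equiv.Perm.mul_apply, q.fix x hq, p.fix x hp]⟩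
  one := ⟨Finset.range m, 1, le_refl _, fun _ _ => rfl⟩
  mul_assoc p q r := ext (Finset.union_assoc _ _ _) (mul_assoc _ _ _)
  one_mul p := ext (Finset.union_eq_right.mpr p.range_sub) (one_mul _)
  mul_one p := ext (Finset.union_eq_left.mpr p.range_sub) (mul_one _)

@[simp] theorem mul_d (p q : MPP m) : (p * q).d = p.d ∪ q.d := rfl
@[simp] theorem mul_σ (p q : MPP m) : (p * q).σ = p.σ * q.σ := rfl
@[simp] theorem one_d : (1 : MPP m).d = Finset.range m := rfl
@[simp] theorem one_σ : (1 : MPP m).σ = 1 := rfl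

/-- Two `m`-partial permutations have the same `m`-marked cycle type iff there is a
relabelling of ℕ fixing `[m]` pointwise carrying one to the other. -/
def sameType (p q : MPP m) : Prop :=
  ∃ σ : Equiv.Perm ℕ, (∀ x < m, σ x = x) ∧ p.d.image σ = q.d ∧ σ * p.σ * σ⁻¹ = q.σ

/-- `m₁`: the number of trivial cycles `(∗)`, i.e. fixed points of the permutation lying
in the domain but outside `[m]`. -/
def m1 (p : MPP m) : ℕ := ((p.d \ Finset.range m).filter (fun x => p.σ x = x)).card

/-- `p` padded with fixed points so that its domain becomes `[n]` (when `p.d ⊆ [n]`);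
this realizes the shape `ρ̲ₙ`. -/
def padTo (n : ℕ) (p : MPP m) : MPP m :=
  ⟨p.d ∪ Finset.range n, p.σ, p.range_sub.trans Finset.subset_union_left,
   fun x hx => p.fix x fun h => hx (Finset.mem_union_left _ h)⟩

/-- `p` with `k` fresh fixed points adjoined to its domain; this realizes the shape `ρᵏ`. -/
def addFix (p : MPP m) (k : ℕ) : MPP m :=
  ⟨p.d ∪ (Finset.range (p.d.sup id + 1 + k) \ Finset.range (p.d.sup id + 1)), p.σ,
   p.range_sub.trans Finset.subset_union_left,
   fun x hx => p.fix x fun h => hx (Finset.mem_union_left _ h)⟩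

/-- A shape is proper when it has no cycle `(∗)`, i.e. no fixed point outside `[m]`. -/
def isProper (p : MPP m) : Prop := ∀ x ∈ p.d, m ≤ x → p.σ x ≠ x

/-- The subgroup `Stab_n(m)` of permutations of ℕ fixing `[m]` pointwise and fixing
everything outside `[n]` (i.e. `Stab_n(m) ≤ S_n`). -/
def StabN (m n : ℕ) : Subgroup (Equiv.Perm ℕ) where
  carrier := {σ | (∀ x < m, σ x = x) ∧ (∀ x, n ≤ x → σ x = x)}
  one_mem' := ⟨fun _ _ => rfl, fun _ _ => rfl⟩
  mul_mem' := by
    rintro σ τ ⟨h1, h2⟩ ⟨h3, h4⟩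
    exact ⟨fun x hx => by simp [Equiv.Perm.mul_apply, h3 x hx, h1 x hx],
           fun x hx => by simp [Equiv.Perm.mul_apply, h4 x hx, h2 x hx]⟩
  inv_mem' := by
    rintro σ ⟨h1, h2⟩
    refine ⟨fun x hx => ?_, fun x hx => ?_⟩
    · conv_lhs => rw [← h1 x hx]
      exact σ.symm_apply_apply x
    · conv_lhs => rw [← h2 x hx]
      exact σ.symm_apply_apply x

/-- The conjugation action of `Stab_n(m)` on `m`-partial permutations:
`σ·(d,ω) = (σ(d), σ∘ω∘σ⁻¹)`. -/
def conjAct {n : ℕ} (σ : StabN m n) (p : MPP m) : MPP m :=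
  ⟨p.d.image (σ : Equiv.Perm ℕ), (σ : Equiv.Perm ℕ) * p.σ * (σ : Equiv.Perm ℕ)⁻¹,
   fun x hx => Finset.mem_image.mpr
     ⟨x, p.range_sub hx, σ.2.1 x (Finset.mem_range.mp hx)⟩,
   fun x hx => by
     have h1 : (σ : Equiv.Perm ℕ)⁻¹ x ∉ p.d := fun h =>
       hx (Finset.mem_image.mpr ⟨_, h, (σ : Equiv.Perm ℕ).apply_symm_apply x⟩)
     rw [Equiv.Perm.mul_apply, Equiv.Perm.mul_apply, p.fix _ h1]
     exact (σ : Equiv.Perm ℕ).apply_symm_apply x⟩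

end MPP

private lemma exists_perm_disjoint {α : Type*} [DecidableEq α] :
    ∀ (k : ℕ) (s t : Finset α), s.card = k → t.card = k → Disjoint s t →
      ∃ π : Equiv.Perm α, s.image (π : α → α) = t ∧ ∀ x ∉ s ∪ t, π x = x := by
  intro k
  induction k with
  | zero =>
    intro s t hs ht _
    refine ⟨1, ?_, fun x _ => rfl⟩
    rw [Finset.card_eq_zero.mp hs, Finset.card_eq_zero.mp ht, Finset.image_empty]
  | succ k ih =>
    intro s t hs ht hdisj
    have hsne : s.Nonempty := Finset.card_pos.mp (by omega)
    have htne : t.Nonempty := Finset.card_pos.mp (by omega)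
    obtain ⟨a, ha⟩ := hsne
    obtain ⟨b, hb⟩ := htne
    have hs' : (s.erase a).card = k := by rw [Finset.card_erase_of_mem ha, hs]; rfl
    have ht' : (t.erase b).card = k := by rw [Finset.card_erase_of_mem hb, ht]; rfl
    have hdisj' : Disjoint (s.erase a) (t.erase b) :=
      hdisj.mono (Finset.erase_subset _ _) (Finset.erase_subset _ _)
    obtain ⟨π', h1, h2⟩ := ih _ _ hs' ht' hdisj'
    have hat : a ∉ t := Finset.disjoint_left.mp hdisj ha
    have hbs : b ∉ s := Finset.disjoint_right.mp hdisj hb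
    have hab : a ≠ b := fun h => hat (h ▸ hb)
    have hπa : π' a = a := h2 a (by
      simp only [Finset.mem_union, Finset.mem_erase, not_or, not_and]
      exact ⟨fun h => absurd rfl h, fun _ => hat⟩)
    refine ⟨Equiv.swap a b * π', ?_, ?_⟩
    · have hs_ins : s = insert a (s.erase a) := (Finset.insert_erase ha).symm
      rw [hs_ins, Finset.image_insert]
      have hab' : (Equiv.swap a b * π') a = b := by
        simp [Equiv.Perm.mul_apply, hπa]
      rw [hab']
      have himg : (s.erase a).image ((Equiv.swap a b * π' : Equiv.Perm α) : α → α)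
          = (s.erase a).image π' := Finset.image_congr (fun x hx => by
        have hx' : π' x ∈ t.erase b := h1 ▸ Finset.mem_image_of_mem _ hx
        have hxa : π' x ≠ a := fun h =>
          hat (Finset.erase_subset _ _ (h ▸ hx'))
        have hxb : π' x ≠ b := (Finset.mem_erase.mp hx').1
        simp [Equiv.Perm.mul_apply, Equiv.swap_apply_of_ne_of_ne hxa hxb])
      rw [himg, h1, Finset.insert_erase hb]
    · intro x hx
      have hxs : x ∉ s := fun h => hx (Finset.mem_union_left _ h)
      have hxt : x ∉ t := fun h => hx (Finset.mem_union_right _ h)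
      have hx' : π' x = x := h2 x (by
        simp only [Finset.mem_union, not_or]
        exact ⟨fun h => hxs (Finset.erase_subset _ _ h),
               fun h => hxt (Finset.erase_subset _ _ h)⟩)
      have hxa : x ≠ a := fun h => hxs (h ▸ ha)
      have hxb : x ≠ b := fun h => hxt (h ▸ hb)
      simp [Equiv.Perm.mul_apply, hx', Equiv.swap_apply_of_ne_of_ne hxa hxb]

private lemma exists_perm_map {α : Type*} [DecidableEq α] (s t : Finset α)
    (h : s.card = t.card) :
    ∃ π : Equiv.Perm α, s.image (π : α → α) = t ∧ ∀ x ∉ s ∪ t, π x = x := by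
  have hcs : (s \ t).card + (s ∩ t).card = s.card := Finset.card_sdiff_add_card_inter s t
  have hct : (t \ s).card + (t ∩ s).card = t.card := Finset.card_sdiff_add_card_inter t s
  rw [Finset.inter_comm] at hct
  have h1 : (t \ s).card = (s \ t).card := by omega
  obtain ⟨π, hπ1, hπ2⟩ := exists_perm_disjoint (s \ t).card (s \ t) (t \ s) rfl h1
    (disjoint_sdiff_sdiff)
  refine ⟨π, ?_, fun x hx => hπ2 x fun hmem => hx ?_⟩
  · have hfix : ∀ x ∈ s ∩ t, π x = x := fun x hx => hπ2 x (by
      simp only [Finset.mem_inter] at hx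
      simp only [Finset.mem_union, Finset.mem_sdiff, not_or, not_and, not_not]
      exact ⟨fun _ => hx.2, fun _ => hx.1⟩)
    have hsplit : s = (s \ t) ∪ (s ∩ t) := (Finset.sdiff_union_inter s t).symm
    rw [hsplit, Finset.image_union, hπ1]
    have himg2 : (s ∩ t).image (π : α → α) = s ∩ t := by
      ext y
      simp only [Finset.mem_image]
      constructor
      · rintro ⟨x, hx, rfl⟩; rwa [hfix x hx]
      · intro hy; exact ⟨y, hy, hfix y hy⟩
    rw [himg2]
    ext x
    simp only [Finset.mem_union, Finset.mem_sdiff, Finset.mem_inter]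
    tauto
  · simp only [Finset.mem_union, Finset.mem_sdiff] at hmem ⊢
    tauto

private lemma MPP.m1_eq_of_sameType {m : ℕ} {p q : MPP m} (h : p.sameType q) :
    p.m1 = q.m1 := by
  classical
  obtain ⟨σ, hm, hd, hσ⟩ := h
  have hpt : ∀ x, σ (p.σ (σ⁻¹ x)) = q.σ x := fun x => by rw [← hσ]; rfl
  have key : ((q.d \ Finset.range m).filter fun x => q.σ x = x)
      = ((p.d \ Finset.range m).filter fun x => p.σ x = x).image σ := by
    ext x
    simp only [Finset.mem_image, Finset.mem_filter, Finset.mem_sdiff, Finset.mem_range,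
      not_lt]
    constructor
    · rintro ⟨⟨hxd, hxm⟩, hx⟩
      refine ⟨σ⁻¹ x, ⟨⟨?_, ?_⟩, ?_⟩, σ.apply_symm_apply x⟩
      · rw [← hd] at hxd
        obtain ⟨y, hy, hyx⟩ := Finset.mem_image.mp hxd
        rw [← hyx, show σ⁻¹ (σ y) = y from σ.symm_apply_apply y]; exact hy
      · by_contra hlt
        push_neg at hlt
        have h1 : σ (σ⁻¹ x) = σ⁻¹ x := hm _ hlt
        rw [show σ (σ⁻¹ x) = x from σ.apply_symm_apply x] at h1
        omega
      · have := hpt x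
        rw [hx] at this
        exact σ.injective (by rw [this, show σ (σ⁻¹ x) = x from σ.apply_symm_apply x])
    · rintro ⟨y, ⟨⟨hyd, hym⟩, hy⟩, rfl⟩
      refine ⟨⟨?_, ?_⟩, ?_⟩
      · rw [← hd]; exact Finset.mem_image_of_mem _ hyd
      · by_contra hlt
        push_neg at hlt
        have h1 : σ (σ y) = σ y := hm _ hlt
        have := σ.injective h1
        omega
      · have := hpt (σ y)
        rw [show σ⁻¹ (σ y) = y from σ.symm_apply_apply y, hy] at this
        exact this.symm
  rw [MPP.m1, MPP.m1, key, Finset.card_image_of_injective _ σ.injective]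

/-- for a permutation v of [n] of m-marked cycle type ρ̲ₙ, the number of
m-partial permutations of [n] of type ρ whose extension is v equals
C(n − |ρ| + m₁(ρ), m₁(ρ)). -/
theorem card_fiber_eq (m n : ℕ) (r : MPP m) (hr : r.d ⊆ Finset.range n)
    (v : MPP m) (hv : v.d = Finset.range n) (hvt : MPP.sameType (r.padTo n) v) :
    Nat.card {p : MPP m // p.d ⊆ Finset.range n ∧ MPP.sameType r p ∧ p.σ = v.σ} =
      (n - r.d.card + r.m1).choose r.m1 := by
  classical
  obtain ⟨τ, hτm, hτd, hτσ⟩ := hvt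
  have hpad : (r.padTo n).d = Finset.range n := Finset.union_eq_right.mpr hr
  have hτσ' : τ * r.σ * τ⁻¹ = v.σ := hτσ
  have hvt' : MPP.sameType (r.padTo n) v := ⟨τ, hτm, hτd, hτσ⟩
  have hτn : (Finset.range n).image (τ : ℕ → ℕ) = Finset.range n := by
    conv_lhs => rw [← hpad]
    rw [hτd, hv]
  set F : Finset ℕ := (Finset.range n \ Finset.range m).filter (fun x => v.σ x = x)
    with hFdef
  have hFn : F ⊆ Finset.range n := fun x hx =>
    (Finset.mem_sdiff.mp (Finset.mem_filter.mp hx).1).1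
  have hFm : ∀ x ∈ F, m ≤ x := fun x hx => by
    have := (Finset.mem_sdiff.mp (Finset.mem_filter.mp hx).1).2
    simpa using this
  have hFfix : ∀ x ∈ F, v.σ x = x := fun x hx => (Finset.mem_filter.mp hx).2
  have hFmem : ∀ x, x ∈ F ↔ (x ∈ Finset.range n ∧ m ≤ x ∧ v.σ x = x) := by
    intro x
    rw [hFdef]
    simp only [Finset.mem_filter, Finset.mem_sdiff, Finset.mem_range, not_lt]
    tauto
  set B : Finset ℕ := Finset.range n \ F with hBdef
  have hBF : Disjoint B F := Finset.sdiff_disjoint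
  have hBn : B ⊆ Finset.range n := Finset.sdiff_subset
  have hBunion : B ∪ F = Finset.range n := Finset.sdiff_union_of_subset hFn
  have hBrange : Finset.range m ⊆ B := by
    intro x hx
    have hxn : x ∈ Finset.range n := hr (r.range_sub hx)
    refine Finset.mem_sdiff.mpr ⟨hxn, fun hF => ?_⟩
    have := hFm x hF
    simp only [Finset.mem_range] at hx
    omega
  have hfixB : ∀ x, x ∉ B → v.σ x = x := by
    intro x hx
    by_cases hxn : x ∈ Finset.range n
    · have hxF : x ∈ F := by
        rw [← hBunion] at hxn
        rcases Finset.mem_union.mp hxn with h | h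
        · exact absurd h hx
        · exact h
      exact hFfix x hxF
    · exact v.fix x (by rwa [hv])
  have hm1card : ∀ p : MPP m, p.d ⊆ Finset.range n → p.σ = v.σ →
      p.m1 = (p.d ∩ F).card := by
    intro p hpd hpσ
    have hset : (p.d \ Finset.range m).filter (fun x => p.σ x = x) = p.d ∩ F := by
      ext x
      simp only [Finset.mem_filter, Finset.mem_sdiff, Finset.mem_inter, Finset.mem_range,
        not_lt, hFmem, hpσ]
      constructor
      · rintro ⟨⟨h1, h2⟩, h3⟩
        exact ⟨h1, Finset.mem_range.mp (hpd h1), h2, h3⟩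
      · rintro ⟨h1, _, h2, h3⟩
        exact ⟨⟨h1, h2⟩, h3⟩
    simp only [MPP.m1]
    rw [hset]
  have hBsub : ∀ p : MPP m, p.d ⊆ Finset.range n → p.σ = v.σ → B ⊆ p.d := by
    intro p hpd hpσ x hx
    obtain ⟨hxn, hxF⟩ := Finset.mem_sdiff.mp hx
    by_cases hxm : x < m
    · exact p.range_sub (Finset.mem_range.mpr hxm)
    · by_contra hxd
      exact hxF ((hFmem x).mpr ⟨hxn, not_lt.mp hxm, hpσ ▸ p.fix x hxd⟩)
  have hdec : ∀ p : MPP m, p.d ⊆ Finset.range n → p.σ = v.σ →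
      p.d = B ∪ (p.d ∩ F) := by
    intro p hpd hpσ
    apply Finset.Subset.antisymm
    · intro x hx
      have hxn := hpd hx
      rw [← hBunion] at hxn
      rcases Finset.mem_union.mp hxn with h | h
      · exact Finset.mem_union_left _ h
      · exact Finset.mem_union_right _ (Finset.mem_inter.mpr ⟨hx, h⟩)
    · exact Finset.union_subset (hBsub p hpd hpσ) Finset.inter_subset_left
  -- the conjugate p₀ of r by τ
  have hτim : r.d.image (τ : ℕ → ℕ) ⊆ Finset.range n := by
    rw [← hτn]
    exact Finset.image_subset_image hr
  have pf1 : Finset.range m ⊆ r.d.image (τ : ℕ → ℕ) := fun x hx =>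
    Finset.mem_image.mpr ⟨x, r.range_sub hx, hτm x (Finset.mem_range.mp hx)⟩
  have pf2 : ∀ x ∉ r.d.image (τ : ℕ → ℕ), v.σ x = x := by
    intro x hx
    have h1 : τ⁻¹ x ∉ r.d := fun h =>
      hx (Finset.mem_image.mpr ⟨_, h, τ.apply_symm_apply x⟩)
    have h2 := r.fix _ h1
    calc v.σ x = τ (r.σ (τ⁻¹ x)) := by rw [← hτσ']; rfl
      _ = x := by rw [h2, show τ (τ⁻¹ x) = x from τ.apply_symm_apply x]
  have hst0 : MPP.sameType r (⟨r.d.image (τ : ℕ → ℕ), v.σ, pf1, pf2⟩ : MPP m) :=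
    ⟨τ, hτm, rfl, hτσ'⟩
  have hS₀card : ((r.d.image (τ : ℕ → ℕ)) ∩ F).card = r.m1 := by
    have h1 := MPP.m1_eq_of_sameType hst0
    have h2 := hm1card ⟨r.d.image (τ : ℕ → ℕ), v.σ, pf1, pf2⟩ hτim rfl
    have h3 : (r.d.image (τ : ℕ → ℕ) ∩ F).card
        = ((⟨r.d.image (τ : ℕ → ℕ), v.σ, pf1, pf2⟩ : MPP m).d ∩ F).card := rfl
    rw [h3, ← h2, ← h1]
  have hp₀d : r.d.image (τ : ℕ → ℕ) = B ∪ ((r.d.image (τ : ℕ → ℕ)) ∩ F) :=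
    hdec ⟨r.d.image (τ : ℕ → ℕ), v.σ, pf1, pf2⟩ hτim rfl
  -- key construction of same-type partner for any admissible domain
  have hmk_type : ∀ (S : Finset ℕ) (hSF : S ⊆ F) (hScard : S.card = r.m1),
      MPP.sameType r (⟨B ∪ S, v.σ, hBrange.trans Finset.subset_union_left,
        fun x hx => hfixB x (fun h => hx (Finset.mem_union_left _ h))⟩ : MPP m) := by
    intro S hSF hScard
    obtain ⟨π, hπ1, hπ2⟩ := exists_perm_map ((r.d.image (τ : ℕ → ℕ)) ∩ F) S
      (by rw [hS₀card, hScard])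
    set K : Finset ℕ := ((r.d.image (τ : ℕ → ℕ)) ∩ F) ∪ S with hKdef
    have hKF : K ⊆ F := Finset.union_subset Finset.inter_subset_right hSF
    have hπfix : ∀ x ∉ K, π x = x := hπ2
    have hcomm : π * v.σ * π⁻¹ = v.σ := by
      ext x
      show π (v.σ (π⁻¹ x)) = v.σ x
      by_cases hx : x ∈ K
      · have h0 : π (π⁻¹ x) ∈ K := by rwa [show π (π⁻¹ x) = x from π.apply_symm_apply x]
        have h1 : π⁻¹ x ∈ K := by
          by_contra hc
          rw [hπfix _ hc] at h0
          exact hc h0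
        have h2 : v.σ (π⁻¹ x) = π⁻¹ x := hFfix _ (hKF h1)
        rw [h2, show π (π⁻¹ x) = x from π.apply_symm_apply x, hFfix _ (hKF hx)]
      · have hπx : π x = x := hπfix x hx
        have hπinv : π⁻¹ x = x := by
          conv_lhs => rw [← hπx]
          exact π.symm_apply_apply x
        rw [hπinv]
        by_cases hw : v.σ x ∈ K
        · have h3 : v.σ (v.σ x) = v.σ x := hFfix _ (hKF hw)
          have h4 : v.σ x = x := v.σ.injective h3
          rw [h4, hπx]
        · exact hπfix _ hw
    refine ⟨π * τ, ?_, ?_, ?_⟩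
    · intro x hxm
      have h1 : τ x = x := hτm x hxm
      have h2 : x ∉ K := fun h => absurd (hFm _ (hKF h)) (by omega)
      show π (τ x) = x
      rw [h1, hπfix x h2]
    · show r.d.image ⇑(π * τ) = B ∪ S
      have hcomp : ⇑(π * τ) = ⇑π ∘ ⇑τ := rfl
      rw [hcomp, ← Finset.image_image, hp₀d, Finset.image_union, hπ1]
      have hB : B.image ⇑π = B := by
        ext y
        simp only [Finset.mem_image]
        constructor
        · rintro ⟨x, hx, rfl⟩
          rwa [hπfix x (fun h => Finset.disjoint_left.mp hBF hx (hKF h))]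
        · intro hy
          exact ⟨y, hy, hπfix y (fun h => Finset.disjoint_left.mp hBF hy (hKF h))⟩
      rw [hB]
    · show (π * τ) * r.σ * (π * τ)⁻¹ = v.σ
      have hgrp : (π * τ) * r.σ * (π * τ)⁻¹ = π * (τ * r.σ * τ⁻¹) * π⁻¹ := by
        group
      rw [hgrp, hτσ', hcomm]
  -- the bijection with subsets of F of size m1
  have hmain : Nat.card {p : MPP m // p.d ⊆ Finset.range n ∧ MPP.sameType r p ∧ p.σ = v.σ}
      = (F.powersetCard r.m1).card := by
    rw [← Nat.card_eq_finsetCard]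
    apply Nat.card_congr
    refine ⟨fun p => ⟨p.1.d ∩ F, Finset.mem_powersetCard.mpr
        ⟨Finset.inter_subset_right,
         ((hm1card p.1 p.2.1 p.2.2.2).symm.trans (MPP.m1_eq_of_sameType p.2.2.1).symm)⟩⟩,
      fun S => ⟨⟨B ∪ S.1, v.σ, hBrange.trans Finset.subset_union_left,
          fun x hx => hfixB x (fun h => hx (Finset.mem_union_left _ h))⟩,
        Finset.union_subset hBn ((Finset.mem_powersetCard.mp S.2).1.trans hFn),
        hmk_type S.1 (Finset.mem_powersetCard.mp S.2).1 (Finset.mem_powersetCard.mp S.2).2,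
        rfl⟩,
      fun p => Subtype.ext (MPP.ext (hdec p.1 p.2.1 p.2.2.2).symm p.2.2.2.symm),
      fun S => Subtype.ext ?_⟩
    show (B ∪ S.1) ∩ F = S.1
    have hS := (Finset.mem_powersetCard.mp S.2).1
    rw [Finset.union_inter_distrib_right, Finset.disjoint_iff_inter_eq_empty.mp hBF,
      Finset.inter_eq_left.mpr hS, Finset.empty_union]
  -- computing the cardinality of F
  have hFcard : F.card = r.m1 + (n - r.d.card) := by
    have h1 : v.m1 = F.card := by
      simp only [MPP.m1]
      rw [hv, hFdef]
    have h2 : (r.padTo n).m1 = v.m1 := MPP.m1_eq_of_sameType hvt'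
    have h3 : (r.padTo n).m1 = r.m1 + (n - r.d.card) := by
      have hset : ((r.padTo n).d \ Finset.range m).filter (fun x => (r.padTo n).σ x = x)
          = ((r.d \ Finset.range m).filter fun x => r.σ x = x) ∪ (Finset.range n \ r.d) := by
        rw [hpad]
        show ((Finset.range n \ Finset.range m).filter fun x => r.σ x = x) = _
        ext x
        simp only [Finset.mem_filter, Finset.mem_sdiff, Finset.mem_union, Finset.mem_range,
          not_lt]
        constructor
        · rintro ⟨⟨hxn, hxm⟩, hfx⟩
          by_cases hxd : x ∈ r.d
          · exact Or.inl ⟨⟨hxd, hxm⟩, hfx⟩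
          · exact Or.inr ⟨hxn, hxd⟩
        · rintro (⟨⟨hxd, hxm⟩, hfx⟩ | ⟨hxn, hxd⟩)
          · exact ⟨⟨Finset.mem_range.mp (hr hxd), hxm⟩, hfx⟩
          · refine ⟨⟨hxn, ?_⟩, r.fix x hxd⟩
            by_contra hlt
            push_neg at hlt
            exact hxd (r.range_sub (Finset.mem_range.mpr hlt))
      have hdisj2 : Disjoint ((r.d \ Finset.range m).filter fun x => r.σ x = x)
          (Finset.range n \ r.d) := by
        rw [Finset.disjoint_left]
        intro x hx hx'
        exact (Finset.mem_sdiff.mp hx').2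
          (Finset.mem_sdiff.mp (Finset.mem_filter.mp hx).1).1
      simp only [MPP.m1]
      rw [hset, Finset.card_union_of_disjoint hdisj2, Finset.card_sdiff_of_subset hr,
        Finset.card_range]
    omega
  rw [hmain, Finset.card_powersetCard, hFcard, Nat.add_comm]
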